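/- Let j ≥ 0 be an integer and m1, m4 integers with |m1| ≤ j and |m4| ≤ j, and let ξ ∈ ℂ with ξ ≠ 0. Then Σ_{q=0}^{2j} C(2j,q) · P^{(j+m4−q, −j+m4+q)}_{j−m4}(0) · P^{(j−m1−q, −j−m1+q)}_{j+m1}(0) · ξ^{2(q−j)} = 2^{m4−m1−2j} · (the coefficient of s^{j−m4}·t^{j+m1} in the polynomial (ξ^{−1}(1+s)(1+t) + ξ(1−s)(1−t))^{2j} in the two variables s and t). -/
import Mathlib


namespace Stmt9

noncomputable section

/-- Generalized binomial coefficient `C(w,k) = w(w−1)⋯(w−k+1)/k!`. -/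
def genBinom (w : ℂ) (k : ℕ) : ℂ := (∏ i ∈ Finset.range k, (w - i)) / (Nat.factorial k : ℂ)

/-- Jacobi polynomial `P^{(α,β)}_n(x)`. -/
def jacobiP (n : ℕ) (α β x : ℂ) : ℂ :=
  ∑ s ∈ Finset.range (n + 1),
    genBinom ((n : ℂ) + α) (n - s) * genBinom ((n : ℂ) + β) s *
      ((x - 1) / 2) ^ s * ((x + 1) / 2) ^ (n - s)

lemma prod_desc (M k : ℕ) : (∏ i ∈ Finset.range k, ((M : ℂ) - i)) = (M.descFactorial k : ℂ) := by
  induction k with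
  | zero => simp
  | succ k ih =>
    rw [Finset.prod_range_succ, ih, Nat.descFactorial_succ]
    rcases le_or_gt k M with h | h
    · rcases eq_or_lt_of_le h with rfl | h'
      · simp
      · push_cast [Nat.cast_sub h'.le]
        ring
    · rw [Nat.descFactorial_eq_zero_iff_lt.2 h]
      simp

lemma genBinom_natCast (M k : ℕ) : genBinom (M : ℂ) k = (M.choose k : ℂ) := by
  rw [genBinom, prod_desc, Nat.descFactorial_eq_factorial_mul_choose]
  push_cast
  rw [mul_comm, mul_div_assoc, div_self (by exact_mod_cast Nat.factorial_ne_zero k), mul_one]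

open Polynomial in
lemma coeff_one_sub_pow (q k : ℕ) :
    ((1 - X : ℂ[X]) ^ q).coeff k = (-1)^k * (q.choose k : ℂ) := by
  have h : (1 - X : ℂ[X]) = (X + C (-1)) * C (-1) := by simp; ring
  rw [h, mul_pow, ← C_pow, coeff_mul_C, coeff_X_add_C_pow]
  rcases le_or_gt k q with hk | hk
  · rw [mul_comm ((-1:ℂ)^(q-k)) _, mul_assoc, ← pow_add]
    have e : q - k + q = k + 2 * (q - k) := by omega
    rw [e, pow_add, pow_mul]
    norm_num; ring
  · rw [Nat.choose_eq_zero_of_lt hk]; simp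

lemma single_add_single_eq (k l a b : ℕ) :
    (Finsupp.single (0 : Fin 2) k + Finsupp.single 1 l = Finsupp.single (0:Fin 2) a + Finsupp.single 1 b)
      ↔ (k = a ∧ l = b) := by
  constructor
  · intro h
    have h0 := DFunLike.congr_fun h 0
    have h1 := DFunLike.congr_fun h 1
    simp [Finsupp.single_apply] at h0 h1
    exact ⟨h0, h1⟩
  · rintro ⟨rfl, rfl⟩; rfl

open MvPolynomial Polynomial in
lemma coeff_aeval_mul (p q : ℂ[X]) (a b : ℕ) :
    MvPolynomial.coeff (Finsupp.single (0 : Fin 2) a + Finsupp.single 1 b)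
      ((Polynomial.aeval (MvPolynomial.X 0) p) * (Polynomial.aeval (MvPolynomial.X 1) q)
        : MvPolynomial (Fin 2) ℂ) = p.coeff a * q.coeff b := by
  induction p using Polynomial.induction_on' with
  | add f g hf hg => simp only [map_add, add_mul, MvPolynomial.coeff_add, hf, hg,
      Polynomial.coeff_add]
  | monomial k c =>
    induction q using Polynomial.induction_on' with
    | add f g hf hg => simp only [map_add, mul_add, MvPolynomial.coeff_add, hf, hg,
        Polynomial.coeff_add]
    | monomial l d =>
      rw [Polynomial.aeval_monomial, Polynomial.aeval_monomial]
      rw [show (algebraMap ℂ (MvPolynomial (Fin 2) ℂ)) = MvPolynomial.C from rfl]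
      rw [show (MvPolynomial.C c * MvPolynomial.X (0:Fin 2) ^ k) * (MvPolynomial.C d * MvPolynomial.X 1 ^ l)
            = MvPolynomial.monomial (Finsupp.single (0:Fin 2) k + Finsupp.single 1 l) (c * d) by
          rw [MvPolynomial.X_pow_eq_monomial, MvPolynomial.X_pow_eq_monomial,
            MvPolynomial.C_mul_monomial, MvPolynomial.C_mul_monomial,
            MvPolynomial.monomial_mul]; ring_nf]
      rw [MvPolynomial.coeff_monomial, Polynomial.coeff_monomial, Polynomial.coeff_monomial]
      simp only [single_add_single_eq]
      by_cases hk : k = a <;> by_cases hl : l = b <;> simp [hk, hl]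

open Polynomial in
lemma phi_eq (q m n : ℕ) :
    (((1 - X : ℂ[X])^q * (1 + X)^m).coeff n) =
      ∑ s ∈ Finset.range (n+1), (-1:ℂ)^s * (q.choose s) * (m.choose (n-s)) := by
  rw [Polynomial.coeff_mul, Finset.Nat.sum_antidiagonal_eq_sum_range_succ_mk]
  exact Finset.sum_congr rfl fun s _ => by
    rw [coeff_one_sub_pow, Polynomial.coeff_one_add_X_pow]

lemma jacobi_zero (n M q : ℕ) (α β : ℂ) (hα : (n:ℂ) + α = M) (hβ : (n:ℂ) + β = q) :
    jacobiP n α β 0 =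
      (2:ℂ)⁻¹^n * ∑ s ∈ Finset.range (n+1), (-1:ℂ)^s * (q.choose s) * (M.choose (n-s)) := by
  unfold jacobiP
  rw [hα, hβ, Finset.mul_sum]
  refine Finset.sum_congr rfl fun s hs => ?_
  have hs' : s ≤ n := by simp [Finset.mem_range] at hs; omega
  rw [genBinom_natCast, genBinom_natCast,
    show ((0:ℂ) - 1)/2 = -2⁻¹ by norm_num, show ((0:ℂ) + 1)/2 = 2⁻¹ by norm_num, neg_pow]
  have h2 : (2:ℂ)⁻¹^s * 2⁻¹^(n-s) = 2⁻¹^n := by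
    rw [← pow_add]; congr 1; omega
  linear_combination (((M.choose (n-s)):ℂ) * ((q.choose s):ℂ) * (-1:ℂ)^s) * h2

/-- A sum of products of Jacobi polynomial values at `0` equals (up to a power of 2) a
coefficient of the generating polynomial `(ξ⁻¹(1+s)(1+t) + ξ(1−s)(1−t))^{2j}`. -/
theorem stmt_9 (j : ℕ) (m1 m4 : ℤ) (h1 : |m1| ≤ (j : ℤ)) (h4 : |m4| ≤ (j : ℤ))
    (ξ : ℂ) (hξ : ξ ≠ 0) :
    ∑ q ∈ Finset.range (2 * j + 1),
        (Nat.choose (2 * j) q : ℂ) *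
          jacobiP ((j : ℤ) - m4).toNat ((j : ℂ) + m4 - q) (-(j : ℂ) + m4 + q) 0 *
          jacobiP ((j : ℤ) + m1).toNat ((j : ℂ) - m1 - q) (-(j : ℂ) - m1 + q) 0 *
          ξ ^ (2 * ((q : ℤ) - j)) =
      (2 : ℂ) ^ (m4 - m1 - 2 * (j : ℤ)) *
        MvPolynomial.coeff
          (Finsupp.single (0 : Fin 2) ((j : ℤ) - m4).toNat +
            Finsupp.single (1 : Fin 2) ((j : ℤ) + m1).toNat)
          ((MvPolynomial.C ξ⁻¹ * (1 + MvPolynomial.X 0) * (1 + MvPolynomial.X 1) +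
              MvPolynomial.C ξ * (1 - MvPolynomial.X 0) * (1 - MvPolynomial.X 1)) ^ (2 * j) :
            MvPolynomial (Fin 2) ℂ) := by
  obtain ⟨hm1l, hm1r⟩ := abs_le.mp h1
  obtain ⟨hm4l, hm4r⟩ := abs_le.mp h4
  set a := ((j : ℤ) - m4).toNat with hadef
  set b := ((j : ℤ) + m1).toNat with hbdef
  have ha : (a : ℤ) = (j : ℤ) - m4 := Int.toNat_of_nonneg (by omega)
  have hb : (b : ℤ) = (j : ℤ) + m1 := Int.toNat_of_nonneg (by omega)
  have haC : (a : ℂ) = (j : ℂ) - m4 := by exact_mod_cast congrArg (Int.cast : ℤ → ℂ) ha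
  have hbC : (b : ℂ) = (j : ℂ) + m1 := by exact_mod_cast congrArg (Int.cast : ℤ → ℂ) hb
  -- expand RHS
  rw [add_comm (MvPolynomial.C ξ⁻¹ * (1 + MvPolynomial.X 0) * (1 + MvPolynomial.X 1))
      (MvPolynomial.C ξ * (1 - MvPolynomial.X 0) * (1 - MvPolynomial.X 1)),
    add_pow, MvPolynomial.coeff_sum, Finset.mul_sum]
  refine Finset.sum_congr rfl fun q hq => ?_
  have hq' : q ≤ 2 * j := by simp [Finset.mem_range] at hq; omega
  -- RHS q-term
  have hterm : (MvPolynomial.C ξ * (1 - MvPolynomial.X 0) * (1 - MvPolynomial.X 1))^q *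
        (MvPolynomial.C ξ⁻¹ * (1 + MvPolynomial.X 0) * (1 + MvPolynomial.X 1))^(2*j - q) *
        (((2*j).choose q : ℕ) : MvPolynomial (Fin 2) ℂ)
      = MvPolynomial.C ((((2*j).choose q : ℕ) : ℂ) * ξ^q * ξ⁻¹^(2*j-q)) *
        ((Polynomial.aeval (MvPolynomial.X 0) ((1 - Polynomial.X)^q * (1 + Polynomial.X)^(2*j-q) : Polynomial ℂ)) *
         (Polynomial.aeval (MvPolynomial.X 1) ((1 - Polynomial.X)^q * (1 + Polynomial.X)^(2*j-q) : Polynomial ℂ))) := by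
    simp only [mul_pow, map_mul, map_pow, map_sub, map_add, map_one, Polynomial.aeval_X,
      MvPolynomial.C_mul, MvPolynomial.C_pow, map_natCast]
    ring
  rw [hterm, MvPolynomial.coeff_C_mul, coeff_aeval_mul, phi_eq, phi_eq]
  -- LHS q-term: jacobi values
  have hMa : (a : ℂ) + ((j : ℂ) + m4 - q) = ((2*j - q : ℕ) : ℂ) := by
    push_cast [Nat.cast_sub hq']
    rw [haC]; ring
  have hqa : (a : ℂ) + (-(j : ℂ) + m4 + q) = (q : ℂ) := by rw [haC]; ring
  have hMb : (b : ℂ) + ((j : ℂ) - m1 - q) = ((2*j - q : ℕ) : ℂ) := by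
    push_cast [Nat.cast_sub hq']
    rw [hbC]; ring
  have hqb : (b : ℂ) + (-(j : ℂ) - m1 + q) = (q : ℂ) := by rw [hbC]; ring
  rw [jacobi_zero a (2*j-q) q _ _ hMa hqa, jacobi_zero b (2*j-q) q _ _ hMb hqb]
  -- scalar arithmetic
  have hξ2 : ξ ^ (2 * ((q : ℤ) - j)) = ξ^q * ξ⁻¹^(2*j - q) := by
    have e1 : 2 * ((q : ℤ) - j) = (q : ℤ) + (-(((2*j - q : ℕ) : ℤ))) := by
      have : ((2*j - q : ℕ) : ℤ) = 2*(j:ℤ) - q := by omega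
      rw [this]; ring
    rw [e1, zpow_add₀ hξ, zpow_natCast, zpow_neg, zpow_natCast, inv_pow]
  have h2p : (2:ℂ) ^ (m4 - m1 - 2 * (j : ℤ)) = 2⁻¹^a * 2⁻¹^b := by
    have e2 : m4 - m1 - 2 * (j : ℤ) = -(((a + b : ℕ) : ℤ)) := by push_cast; omega
    rw [e2, zpow_neg, zpow_natCast, ← inv_pow, pow_add]
  rw [hξ2, h2p]
  ring


end

end Stmt9
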